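/- arXiv:1812.02058 — 4 statements merged into one kernel-verified Lean document; each statement's English description precedes it below -/
import Mathlib

section
/- Let d ≥ 1, let φ₀ : ℝ^d → ℝ be a nonnegative upper semicontinuous function, and let r > 0, ε ≥ 0. Then ∫_{ℝ^d} sup_{y ∈ x + [-(r+ε), r+ε]^d} φ₀(y) dx ≤ ((r+ε)/r)^d · ∫_{ℝ^d} sup_{y ∈ x + [-r, r]^d} φ₀(y) dx (with the convention that the inequality holds trivially if the right-hand side is infinite). -/
/-!
By the layer-cake formula both sides are integrals over `t > 0` of volumes of superlevel sets.
An upper semicontinuous function attains its maximum on a compact cube, so the superlevel set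
`{x | t ≤ sup_{Q̄_ρ(x)} φ}` is the closed set `{φ ≥ t}` thickened by the cube `[-ρ, ρ]^d`. It
therefore suffices to show `vol (F + [-s, s]^d) ≤ (s / r)^d vol (F + [-r, r]^d)` for closed `F`.
Shrinking the box one side at a time and slicing with Fubini reduces this to dimension one. There,
for a finite set `A = {a₁ < ⋯ < aₙ}`, `vol (A + [-ρ, ρ]) = 2ρ + ∑ min (2ρ, aₖ₊₁ - aₖ)`, and
`min (2s, g) ≤ (s / r) min (2r, g)`; a general `A` follows by exhausting the open set
`A + (-s, s)` by compacts and letting the radius decrease to `s`.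
-/

open MeasureTheory Set Pointwise Function

theorem mem_add_Icc_neg_iff {G : Type*} [AddCommGroup G] [Lattice G] [IsOrderedAddMonoid G]
    {A : Set G} {c x : G} : x ∈ A + Icc (-c) c ↔ ∃ a ∈ A, |x - a| ≤ c := by
  simp only [mem_add, mem_Icc, abs_le', neg_le (a := (_ : G) - _), ← eq_sub_iff_add_eq']
  constructor
  · rintro ⟨a, ha, _, ⟨h₁, h₂⟩, rfl⟩
    exact ⟨a, ha, h₂, h₁⟩
  · rintro ⟨a, ha, h₁, h₂⟩
    exact ⟨a, ha, _, ⟨h₂, h₁⟩, rfl⟩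

theorem insert_add_Icc_neg_eq_union {A : Set ℝ} {a m ρ : ℝ} (hm : IsGreatest A m) (hma : m ≤ a) :
    insert a A + Icc (-ρ) ρ = (A + Icc (-ρ) ρ) ∪ Icc (max (a - ρ) (m + ρ)) (a + ρ) := by
  ext x
  simp only [mem_union, mem_add_Icc_neg_iff, exists_mem_insert, mem_Icc, max_le_iff, abs_le]
  constructor
  · rintro (h | h)
    · by_cases hx : x ≤ m + ρ
      · exact .inl ⟨m, hm.1, by linarith, by linarith⟩
      · exact .inr ⟨⟨by linarith, by linarith⟩, by linarith⟩
    · exact .inl h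
  · rintro (h | ⟨⟨h₁, -⟩, h₂⟩)
    · exact .inr h
    · exact .inl ⟨by linarith, by linarith⟩

theorem add_Icc_neg_inter_Icc_subset {A : Set ℝ} {m ρ b c : ℝ} (hm : IsGreatest A m) :
    (A + Icc (-ρ) ρ) ∩ Icc (max b (m + ρ)) c ⊆ {m + ρ} := by
  rintro x ⟨hx, hx', -⟩
  obtain ⟨a, ha, hxa⟩ := mem_add_Icc_neg_iff.1 hx
  have := hm.2 ha
  have := (le_max_right _ _).trans hx'
  exact le_antisymm (by linarith [(abs_le.1 hxa).2]) this

theorem volume_insert_add_Icc_neg {A : Set ℝ} {a m ρ : ℝ} (hm : IsGreatest A m) (hma : m ≤ a) :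
    volume (insert a A + Icc (-ρ) ρ)
      = volume (A + Icc (-ρ) ρ) + ENNReal.ofReal (min (2 * ρ) (a - m)) := by
  rw [insert_add_Icc_neg_eq_union hm hma, measure_union₀ measurableSet_Icc.nullMeasurableSet
    (measure_mono_null (add_Icc_neg_inter_Icc_subset hm) (measure_singleton _)),
    Real.volume_Icc, ← min_sub_sub_left]
  ring_nf

theorem volume_finset_add_Icc_neg_le {r s : ℝ} (hr : 0 < r) (hrs : r ≤ s) (A : Finset ℝ) :
    volume ((A : Set ℝ) + Icc (-s) s)
      ≤ ENNReal.ofReal (s / r) * volume ((A : Set ℝ) + Icc (-r) r) := by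
  have hsr : 1 ≤ s / r := (one_le_div hr).2 hrs
  induction A using Finset.induction_on_max with
  | empty => simp
  | insert a A ha ih =>
    rw [Finset.coe_insert]
    rcases A.eq_empty_or_nonempty with rfl | hA
    · simp only [Finset.coe_empty, insert_empty_eq, singleton_add, image_const_add_Icc,
        Real.volume_Icc, ← ENNReal.ofReal_mul (by positivity : 0 ≤ s / r)]
      refine ENNReal.ofReal_le_ofReal (le_of_eq ?_)
      field_simp
      ring
    · have hm : IsGreatest (A : Set ℝ) (A.max' hA) := A.isGreatest_max' hA
      have hma : A.max' hA < a := ha _ (A.max'_mem hA)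
      have hmin : min (2 * s) (a - A.max' hA) ≤ s / r * min (2 * r) (a - A.max' hA) := by
        rw [mul_min_of_nonneg _ _ (by positivity), div_mul_eq_mul_div, mul_div_assoc,
          mul_div_cancel_right₀ _ hr.ne']
        exact min_le_min (by linarith) (le_mul_of_one_le_left (by linarith) hsr)
      calc volume (insert a (A : Set ℝ) + Icc (-s) s)
          = volume ((A : Set ℝ) + Icc (-s) s) + ENNReal.ofReal (min (2 * s) (a - A.max' hA)) :=
            volume_insert_add_Icc_neg hm hma.le
        _ ≤ ENNReal.ofReal (s / r) * volume ((A : Set ℝ) + Icc (-r) r)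
            + ENNReal.ofReal (s / r * min (2 * r) (a - A.max' hA)) :=
            add_le_add ih (ENNReal.ofReal_le_ofReal hmin)
        _ = ENNReal.ofReal (s / r) * volume (insert a (A : Set ℝ) + Icc (-r) r) := by
            rw [volume_insert_add_Icc_neg hm hma.le, ENNReal.ofReal_mul (by positivity), mul_add]

theorem volume_add_Ioo_neg_le {r s : ℝ} (hr : 0 < r) (hrs : r ≤ s) (A : Set ℝ) :
    volume (A + Ioo (-s) s) ≤ ENNReal.ofReal (s / r) * volume (A + Icc (-r) r) := by
  rw [isOpen_Ioo.add_left.measure_eq_iSup_isCompact]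
  refine iSup₂_le fun K hKA => iSup_le fun hK => ?_
  rw [← iUnion_add_left_image] at hKA
  obtain ⟨A₀, hA₀A, hA₀, hKA₀⟩ := hK.elim_finite_subcover_image
    (fun a _ => isOpen_Ioo.left_addCoset a) hKA
  have hKA₀ : K ⊆ (hA₀.toFinset : Set ℝ) + Icc (-s) s := by
    rw [Finite.coe_toFinset, ← iUnion_add_left_image]
    exact hKA₀.trans (biUnion_mono subset_rfl fun a _ => image_mono Ioo_subset_Icc_self)
  calc volume K ≤ volume ((hA₀.toFinset : Set ℝ) + Icc (-s) s) := measure_mono hKA₀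
    _ ≤ ENNReal.ofReal (s / r) * volume ((hA₀.toFinset : Set ℝ) + Icc (-r) r) :=
      volume_finset_add_Icc_neg_le hr hrs _
    _ ≤ ENNReal.ofReal (s / r) * volume (A + Icc (-r) r) := by
      rw [Finite.coe_toFinset]
      gcongr

theorem volume_add_Icc_neg_le {r s : ℝ} (hr : 0 < r) (hrs : r ≤ s) (A : Set ℝ) :
    volume (A + Icc (-s) s) ≤ ENNReal.ofReal (s / r) * volume (A + Icc (-r) r) := by
  have hlim : Filter.Tendsto (fun s' => ENNReal.ofReal (s' / r) * volume (A + Icc (-r) r))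
      (nhdsWithin s (Ioi s)) (nhds (ENNReal.ofReal (s / r) * volume (A + Icc (-r) r))) := by
    refine ENNReal.Tendsto.mul_const ?_ (.inl (by simpa using div_pos (hr.trans_le hrs) hr))
    exact ((ENNReal.continuous_ofReal.comp (continuous_id.div_const r)).tendsto s).mono_left
      nhdsWithin_le_nhds
  refine ge_of_tendsto hlim (eventually_nhdsWithin_of_forall fun s' (hs' : s < s') => ?_)
  calc volume (A + Icc (-s) s) ≤ volume (A + Ioo (-s') s') := by
        gcongr
        exact Icc_subset_Ioo (by linarith) hs'
    _ ≤ _ := volume_add_Ioo_neg_le hr (by linarith) A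

section Pi

variable {ι : Type*}

theorem isCompact_cube (x : ι → ℝ) (ρ : ℝ) : IsCompact {y : ι → ℝ | ∀ i, |y i - x i| ≤ ρ} := by
  convert isCompact_Icc (a := x - const ι ρ) (b := x + const ι ρ) using 1
  ext y
  simp only [mem_ofPred_eq, mem_Icc, Pi.le_def, ← forall_and, abs_le]
  refine forall_congr' fun i => ?_
  simp only [Pi.sub_apply, Pi.add_apply, const_apply]
  constructor <;> rintro ⟨h₁, h₂⟩ <;> constructor <;> linarith

variable [DecidableEq ι]

theorem update_mem_add_Icc_neg_update_iff {F : Set (ι → ℝ)} {τ w : ι → ℝ} {i : ι} {c t : ℝ} :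
    update w i t ∈ F + Icc (-update τ i c) (update τ i c) ↔
      t ∈ (· i) '' {f ∈ F | ∀ j ≠ i, |w j - f j| ≤ τ j} + Icc (-c) c := by
  simp only [mem_add_Icc_neg_iff, Pi.le_def, Pi.abs_apply, Pi.sub_apply]
  constructor
  · rintro ⟨f, hf, h⟩
    refine ⟨f i, ⟨f, ⟨hf, fun j hj => ?_⟩, rfl⟩, by simpa using h i⟩
    simpa [hj] using h j
  · rintro ⟨_, ⟨f, ⟨hf, h⟩, rfl⟩, hi⟩
    refine ⟨f, hf, fun j => ?_⟩
    rcases eq_or_ne j i with rfl | hj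
    · simpa using hi
    · simpa [hj] using h j hj

variable [Fintype ι]

theorem volume_add_Icc_neg_le_update {F : Set (ι → ℝ)} (hF : IsClosed F) (τ : ι → ℝ) (i : ι)
    {b : ℝ} (hb : 0 < b) (hbτ : b ≤ τ i) :
    volume (F + Icc (-τ) τ)
      ≤ ENNReal.ofReal (τ i / b) * volume (F + Icc (-update τ i b) (update τ i b)) := by
  have hmeas (σ : ι → ℝ) : MeasurableSet (F + Icc (-σ) σ) :=
    (hF.add_right_of_isCompact isCompact_Icc).measurableSet
  have hslice (c : ℝ) (w : ι → ℝ) :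
      ∫⁻ t, (F + Icc (-update τ i c) (update τ i c)).indicator 1 (update w i t)
        = volume ((· i) '' {f ∈ F | ∀ j ≠ i, |w j - f j| ≤ τ j} + Icc (-c) c) := by
    have hpre : (· i) '' {f ∈ F | ∀ j ≠ i, |w j - f j| ≤ τ j} + Icc (-c) c
        = update w i ⁻¹' (F + Icc (-update τ i c) (update τ i c)) := by
      ext t
      exact update_mem_add_Icc_neg_update_iff.symm
    rw [hpre, ← lintegral_indicator_one ((hmeas _).preimage (measurable_update w))]
    rfl
  rw [← update_eq_self i τ, update_idem, update_self]
  simp_rw [← lintegral_indicator_one (hmeas _), volume_pi,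
    ← lintegral_const_mul' _ _ ENNReal.ofReal_ne_top]
  refine lintegral_le_of_lmarginal_le {i} (measurable_one.indicator (hmeas _))
    ((measurable_one.indicator (hmeas _)).const_mul _) fun w => ?_
  simp only [lmarginal_singleton]
  rw [lintegral_const_mul' _ _ ENNReal.ofReal_ne_top, hslice, hslice]
  exact volume_add_Icc_neg_le hb hbτ _

theorem volume_add_Icc_neg_le_prod {F : Set (ι → ℝ)} (hF : IsClosed F) {τ σ : ι → ℝ}
    (hτ : ∀ i, 0 < τ i) (hτσ : τ ≤ σ) :
    volume (F + Icc (-σ) σ) ≤ (∏ i, ENNReal.ofReal (σ i / τ i)) * volume (F + Icc (-τ) τ) := by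
  suffices ∀ T : Finset ι, volume (F + Icc (-σ) σ) ≤
      (∏ i ∈ T, ENNReal.ofReal (σ i / τ i)) *
        volume (F + Icc (-T.piecewise τ σ) (T.piecewise τ σ)) by
    simpa using this Finset.univ
  intro T
  induction T using Finset.induction_on with
  | empty => simp
  | insert i T hi ih =>
    have hσi : T.piecewise τ σ i = σ i := T.piecewise_eq_of_notMem _ _ hi
    calc volume (F + Icc (-σ) σ)
        ≤ (∏ j ∈ T, ENNReal.ofReal (σ j / τ j)) *
            volume (F + Icc (-T.piecewise τ σ) (T.piecewise τ σ)) := ih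
      _ ≤ (∏ j ∈ T, ENNReal.ofReal (σ j / τ j)) * (ENNReal.ofReal (σ i / τ i) *
            volume (F + Icc (-update (T.piecewise τ σ) i (τ i))
              (update (T.piecewise τ σ) i (τ i)))) := by
        gcongr
        have := volume_add_Icc_neg_le_update hF (T.piecewise τ σ) i (hτ i) (hσi ▸ hτσ i)
        rwa [hσi] at this
      _ = _ := by rw [Finset.piecewise_insert, Finset.prod_insert hi, mul_left_comm, mul_assoc]

end Pi

theorem UpperSemicontinuous.le_sSup_image_iff {X β : Type*} [TopologicalSpace X]
    [ConditionallyCompleteLinearOrder β] {φ : X → β} (hφ : UpperSemicontinuous φ) {K : Set X}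
    (hK : IsCompact K) (hne : K.Nonempty) {t : β} : t ≤ sSup (φ '' K) ↔ ∃ y ∈ K, t ≤ φ y := by
  obtain ⟨y, hyK, hy⟩ := (hφ.upperSemicontinuousOn K).exists_isMaxOn hne hK
  rw [IsGreatest.csSup_eq ⟨mem_image_of_mem φ hyK, forall_mem_image.2 hy⟩]
  exact ⟨fun h => ⟨y, hyK, h⟩, fun ⟨z, hzK, hz⟩ => hz.trans (hy hzK)⟩

section Cube

variable {ι : Type*} {φ : (ι → ℝ) → ℝ}

theorem setOf_le_sSup_image_cube_eq (hφ : UpperSemicontinuous φ) {ρ : ℝ} (hρ : 0 ≤ ρ) (t : ℝ) :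
    {x | t ≤ sSup (φ '' {y | ∀ i, |y i - x i| ≤ ρ})}
      = {y | t ≤ φ y} + Icc (-const ι ρ) (const ι ρ) := by
  ext x
  rw [mem_ofPred_eq, hφ.le_sSup_image_iff (isCompact_cube x ρ) ⟨x, fun i => by simpa using hρ⟩,
    mem_add_Icc_neg_iff]
  simp only [mem_ofPred_eq, Pi.le_def, Pi.abs_apply, Pi.sub_apply, const_apply,
    abs_sub_comm (x _) (_ : ℝ)]
  exact exists_congr fun y => and_comm

theorem lintegral_ofReal_sSup_image_cube [Fintype ι] (hpos : ∀ x, 0 ≤ φ x)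
    (hφ : UpperSemicontinuous φ) {ρ : ℝ} (hρ : 0 ≤ ρ) :
    ∫⁻ x : ι → ℝ, ENNReal.ofReal (sSup (φ '' {y | ∀ i, |y i - x i| ≤ ρ}))
      = ∫⁻ t in Ioi 0, volume ({y | t ≤ φ y} + Icc (-const ι ρ) (const ι ρ)) := by
  have hmeas : Measurable fun x : ι → ℝ => sSup (φ '' {y | ∀ i, |y i - x i| ≤ ρ}) :=
    measurable_of_Ici fun t => by
      change MeasurableSet {x | t ≤ _}
      rw [setOf_le_sSup_image_cube_eq hφ hρ]
      exact ((hφ.isClosed_preimage t).add_right_of_isCompact isCompact_Icc).measurableSet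
  have hnonneg (x : ι → ℝ) : 0 ≤ sSup (φ '' {y | ∀ i, |y i - x i| ≤ ρ}) :=
    (hφ.le_sSup_image_iff (isCompact_cube x ρ) ⟨x, fun i => by simpa using hρ⟩).2
      ⟨x, fun i => by simpa using hρ, hpos x⟩
  rw [lintegral_eq_lintegral_meas_le volume (.of_forall hnonneg) hmeas.aemeasurable]
  simp_rw [setOf_le_sSup_image_cube_eq hφ hρ]

end Cube

theorem stmt_0_general (d : ℕ) (φ : (Fin d → ℝ) → ℝ)
    (hpos : ∀ x, 0 ≤ φ x) (husc : UpperSemicontinuous φ)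
    (r ε : ℝ) (hr : 0 < r) (hε : 0 ≤ ε) :
    ∫⁻ x : Fin d → ℝ, ENNReal.ofReal (sSup (φ '' {y | ∀ i, |y i - x i| ≤ r + ε}))
      ≤ ENNReal.ofReal (((r + ε) / r) ^ d) *
        ∫⁻ x : Fin d → ℝ, ENNReal.ofReal (sSup (φ '' {y | ∀ i, |y i - x i| ≤ r})) := by
  have hrs : r ≤ r + ε := le_add_of_nonneg_right hε
  rw [lintegral_ofReal_sSup_image_cube hpos husc (hr.le.trans hrs),
    lintegral_ofReal_sSup_image_cube hpos husc hr.le,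
    ← lintegral_const_mul' _ _ ENNReal.ofReal_ne_top]
  refine lintegral_mono fun t => ?_
  calc volume ({y | t ≤ φ y} + Icc (-const (Fin d) (r + ε)) (const (Fin d) (r + ε)))
      ≤ (∏ _i : Fin d, ENNReal.ofReal ((r + ε) / r)) *
          volume ({y | t ≤ φ y} + Icc (-const (Fin d) r) (const (Fin d) r)) :=
        volume_add_Icc_neg_le_prod (husc.isClosed_preimage t) (fun _ => hr) (fun _ => hrs)
    _ = _ := by
      rw [Finset.prod_const, Finset.card_univ, Fintype.card_fin,
        ENNReal.ofReal_pow (div_nonneg (hr.le.trans hrs) hr.le)]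

/-- Optimal `L^∞_int` inequality (Lemma B of the paper): for nonnegative upper
semicontinuous `φ₀` on `ℝ^d`, `r > 0`, `ε ≥ 0`,
`∫ sup_{Q̄_{r+ε}(x)} φ₀ dx ≤ ((r+ε)/r)^d ∫ sup_{Q̄_r(x)} φ₀ dx`. -/
theorem stmt_0 (d : ℕ) (hd : 1 ≤ d) (φ : (Fin d → ℝ) → ℝ)
    (hpos : ∀ x, 0 ≤ φ x) (husc : UpperSemicontinuous φ)
    (r ε : ℝ) (hr : 0 < r) (hε : 0 ≤ ε) :
    ∫⁻ x : Fin d → ℝ, ENNReal.ofReal (sSup (φ '' {y | ∀ i, |y i - x i| ≤ r + ε}))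
      ≤ ENNReal.ofReal (((r + ε) / r) ^ d) *
        ∫⁻ x : Fin d → ℝ, ENNReal.ofReal (sSup (φ '' {y | ∀ i, |y i - x i| ≤ r})) :=
  stmt_0_general d φ hpos husc r ε hr hε
end

section
/- Let J ⊆ ℝ be a nonempty bounded set and r > 0, ε ≥ 0. Then the Lebesgue measure satisfies λ(J + [-(r+ε), r+ε]) ≤ ((r+ε)/r) · λ(J + [-r, r]). -/
/-!
For a finite set `F`, add its points to `F` from left to right. A new rightmost point `a`, at
distance `d` from the previous maximum, enlarges `F + [-t, t]` by at most `min (2t) d` and, when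
`t = r`, by at least `min (2r) d`; since `min (2s) d ≤ (s/r) min (2r) d` for `r ≤ s`, induction
gives the bound for finite sets. A bounded `J` is within `δ` of a finite subset `F`, so
`J + [-s, s] ⊆ F + [-(s+δ), s+δ]`, and letting `δ → 0` gives the bound for `J`.
-/

open MeasureTheory Pointwise

open Set Filter Topology

lemma insert_add_Icc (a t : ℝ) (F : Set ℝ) :
    insert a F + Icc (-t) t = Icc (a - t) (a + t) ∪ (F + Icc (-t) t) := by
  rw [insert_eq, union_add, singleton_add, image_const_add_Icc, ← sub_eq_add_neg]

lemma volume_Icc_sdiff_Iic (a m t : ℝ) :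
    volume (Icc (a - t) (a + t) \ Iic (m + t)) = ENNReal.ofReal (min (2 * t) (a - m)) := by
  have h : (Ioc (a - t) (a + t) \ Iic (m + t) : Set ℝ) =ᵐ[volume]
      (Icc (a - t) (a + t) \ Iic (m + t) : Set ℝ) :=
    Ioc_ae_eq_Icc.diff EventuallyEq.rfl
  rw [← measure_congr h, Ioc_sdiff_Iic, Real.volume_Ioc, ← min_sub_sub_left]
  ring_nf

lemma min_two_mul_le_div_mul {r s d : ℝ} (hr : 0 < r) (hrs : r ≤ s) (hd : 0 ≤ d) :
    min (2 * s) d ≤ s / r * min (2 * r) d := by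
  rcases le_total d (2 * r) with h | h
  · rw [min_eq_right h]
    have : 1 ≤ s / r := (one_le_div hr).mpr hrs
    nlinarith [min_le_right (2 * s) d]
  · rw [min_eq_left h, show s / r * (2 * r) = 2 * s by field_simp]
    exact min_le_left _ _

lemma volume_Icc_union_le {r s a m : ℝ} (hr : 0 < r) (hrs : r ≤ s) (hma : m ≤ a)
    {Us Ur : Set ℝ} (hUs : Icc (a - s) (a + s) ∩ Iic (m + s) ⊆ Us) (hUr : Ur ⊆ Iic (m + r))
    (h : volume Us ≤ ENNReal.ofReal (s / r) * volume Ur) :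
    volume (Icc (a - s) (a + s) ∪ Us) ≤
      ENNReal.ofReal (s / r) * volume (Icc (a - r) (a + r) ∪ Ur) := by
  have hle_s : volume (Icc (a - s) (a + s) ∪ Us) ≤
      volume (Icc (a - s) (a + s) \ Iic (m + s)) + volume Us := by
    refine (measure_mono fun y hy => ?_).trans (measure_union_le _ _)
    by_cases hy' : y ∈ Iic (m + s)
    · exact Or.inr (hy.elim (fun hy => hUs ⟨hy, hy'⟩) id)
    · exact hy.imp (fun hy => ⟨hy, hy'⟩) id
  have hge_r : volume (Icc (a - r) (a + r) \ Iic (m + r)) + volume Ur ≤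
      volume (Icc (a - r) (a + r) ∪ Ur) := by
    rw [← measure_union' (disjoint_sdiff_left.mono_right hUr)
      (measurableSet_Icc.diff measurableSet_Iic)]
    exact measure_mono (union_subset_union_left _ sdiff_subset)
  refine hle_s.trans (le_trans ?_ (mul_le_mul_right hge_r _))
  rw [mul_add, volume_Icc_sdiff_Iic, volume_Icc_sdiff_Iic,
    ← ENNReal.ofReal_mul (div_pos (hr.trans_le hrs) hr).le]
  gcongr
  exact min_two_mul_le_div_mul hr hrs (sub_nonneg.mpr hma)

theorem volume_finset_add_Icc_le {r s : ℝ} (hr : 0 < r) (hrs : r ≤ s) (F : Finset ℝ) :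
    volume ((F : Set ℝ) + Icc (-s) s) ≤
      ENNReal.ofReal (s / r) * volume ((F : Set ℝ) + Icc (-r) r) := by
  induction F using Finset.induction_on_max with
  | empty => simp
  | insert a F hlt ih =>
    rw [Finset.coe_insert, insert_add_Icc, insert_add_Icc]
    rcases F.eq_empty_or_nonempty with rfl | hF
    · simp only [Finset.coe_empty, empty_add, union_empty, Real.volume_Icc,
        ← ENNReal.ofReal_mul (div_nonneg (hr.le.trans hrs) hr.le)]
      gcongr
      field_simp
      linarith
    · have hm := F.max'_mem hF
      refine volume_Icc_union_le hr hrs (hlt _ hm).le ?_ ?_ ih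
      · rintro y ⟨⟨hy, -⟩, hy'⟩
        exact ⟨_, hm, y - F.max' hF, ⟨by linarith [hlt _ hm], sub_le_iff_le_add'.mpr hy'⟩,
          by ring⟩
      · rintro _ ⟨x, hx, y, hy, rfl⟩
        exact add_le_add (F.le_max' x hx) hy.2

lemma ENNReal.le_ofReal_mul_of_forall_gt {a b : ENNReal} {x : ℝ} (hx : 0 < x)
    (h : ∀ y > x, a ≤ ENNReal.ofReal y * b) : a ≤ ENNReal.ofReal x * b := by
  have : Tendsto (fun y => ENNReal.ofReal y * b) (𝓝[>] x) (𝓝 (ENNReal.ofReal x * b)) :=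
    ENNReal.Tendsto.mul_const (ENNReal.tendsto_ofReal nhdsWithin_le_nhds)
      (Or.inl (ENNReal.ofReal_pos.mpr hx).ne')
  exact ge_of_tendsto this (eventually_nhdsWithin_of_forall h)

lemma Bornology.IsBounded.exists_finset_subset_add_Icc {J : Set ℝ} (hJ : Bornology.IsBounded J)
    {δ : ℝ} (hδ : 0 < δ) : ∃ F : Finset ℝ, ↑F ⊆ J ∧ J ⊆ ↑F + Icc (-δ) δ := by
  obtain ⟨t, htJ, ht, hJt⟩ := Metric.finite_approx_of_totallyBounded
    (hJ.isCompact_closure.totallyBounded.subset subset_closure) δ hδ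
  refine ⟨ht.toFinset, by simpa using htJ, fun z hz => ?_⟩
  obtain ⟨x, hx, hzx⟩ := mem_iUnion₂.mp (hJt hz)
  rw [Real.ball_eq_Ioo] at hzx
  exact ⟨x, by simpa using hx, z - x, ⟨by linarith [hzx.1], by linarith [hzx.2]⟩, by ring⟩

theorem Bornology.IsBounded.volume_add_Icc_le {J : Set ℝ} (hJ : Bornology.IsBounded J)
    {r s : ℝ} (hr : 0 < r) (hrs : r ≤ s) :
    volume (J + Icc (-s) s) ≤ ENNReal.ofReal (s / r) * volume (J + Icc (-r) r) := by
  refine ENNReal.le_ofReal_mul_of_forall_gt (div_pos (hr.trans_le hrs) hr) fun c hc => ?_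
  have hcr : s < c * r := (div_lt_iff₀ hr).mp hc
  obtain ⟨F, hFJ, hJF⟩ := hJ.exists_finset_subset_add_Icc (sub_pos.mpr hcr)
  calc volume (J + Icc (-s) s)
      ≤ volume ((F : Set ℝ) + Icc (-(c * r)) (c * r)) := by
        refine measure_mono ((add_subset_add_right hJF).trans ?_)
        rw [add_assoc]
        refine add_subset_add_left ((Icc_add_Icc_subset _ _ _ _).trans_eq ?_)
        congr 1 <;> ring
    _ ≤ ENNReal.ofReal (c * r / r) * volume ((F : Set ℝ) + Icc (-r) r) :=
        volume_finset_add_Icc_le hr (hrs.trans hcr.le) F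
    _ ≤ ENNReal.ofReal c * volume (J + Icc (-r) r) := by
        rw [mul_div_cancel_right₀ _ hr.ne']
        gcongr

theorem stmt_1_general (J : Set ℝ) (hbd : Bornology.IsBounded J)
    (r ε : ℝ) (hr : 0 < r) (hε : 0 ≤ ε) :
    volume (J + Set.Icc (-(r + ε)) (r + ε))
      ≤ ENNReal.ofReal ((r + ε) / r) * volume (J + Set.Icc (-r) r) :=
  hbd.volume_add_Icc_le hr (le_add_of_nonneg_right hε)

/-- One-dimensional dilation estimate for Minkowski sums with intervals:
for nonempty bounded `J ⊆ ℝ`, `r > 0`, `ε ≥ 0`,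
`λ(J + [-(r+ε), r+ε]) ≤ ((r+ε)/r) · λ(J + [-r, r])`. -/
theorem stmt_1 (J : Set ℝ) (hne : J.Nonempty) (hbd : Bornology.IsBounded J)
    (r ε : ℝ) (hr : 0 < r) (hε : 0 ≤ ε) :
    volume (J + Set.Icc (-(r + ε)) (r + ε))
      ≤ ENNReal.ofReal ((r + ε) / r) * volume (J + Set.Icc (-r) r) :=
  stmt_1_general J hbd r ε hr hε
end

section
/- Let d ≥ 1 and for n ≥ 1 define φ₀ⁿ(x) := max(1 − n|x|, 0) for x ∈ ℝ^d, and for t > 0 define φₙ(x, t) := sup_{y ∈ x + [-t,t]^d} φ₀ⁿ(y). Then φ₀ⁿ → 0 in L¹(ℝ^d) as n → ∞, but for every fixed t > 0, φₙ(·, t) → 𝟙_{[-t,t]^d} in L¹(ℝ^d) as n → ∞; in particular lim_{n→∞} ‖φₙ(·,t)‖_{L¹} = (2t)^d ≠ 0. -/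
/-!
Both `φ₀ⁿ` and `φₙ(·, t)` take values in `[0, 1]`. The tent `φ₀ⁿ` vanishes outside the cube
`[-1/n, 1/n]^d`, so its integral is at most `(2/n)^d`. The sup over `x + [-t,t]^d` equals `1` as
soon as the window contains the peak `0`, i.e. on `[-t,t]^d`, and vanishes once the window misses
`[-1/n, 1/n]^d`, i.e. outside `[-t-1/n, t+1/n]^d`. Hence `φₙ(·, t)` differs from `𝟙_{[-t,t]^d}`
only on a shell of volume `(2t + 2/n)^d - (2t)^d → 0`.
-/

open MeasureTheory Filter Topology Set

section Measure

variable {α : Type*} [MeasurableSpace α] {μ : Measure α} {f : α → ℝ} {s : Set α}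

lemma lintegral_ofReal_le_measure (hf : ∀ x, f x ≤ 1) (hs : ∀ x ∉ s, f x ≤ 0) :
    ∫⁻ x, ENNReal.ofReal (f x) ∂μ ≤ μ s := by
  refine le_trans (lintegral_mono fun x => ?_) (lintegral_indicator_one_le s)
  by_cases hx : x ∈ s
  · simpa [hx] using hf x
  · simp [hx, ENNReal.ofReal_eq_zero.2 (hs x hx)]

lemma measure_le_lintegral_ofReal (hs : MeasurableSet s) (hf : ∀ x ∈ s, 1 ≤ f x) :
    μ s ≤ ∫⁻ x, ENNReal.ofReal (f x) ∂μ := by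
  rw [← lintegral_indicator_one hs]
  refine lintegral_mono fun x => ?_
  by_cases hx : x ∈ s
  · simpa [hx] using hf x hx
  · simp [hx]

lemma lintegral_ofReal_abs_sub_indicator_le {A B : Set α} (hf₀ : ∀ x, 0 ≤ f x)
    (hf₁ : ∀ x, f x ≤ 1) (hB : ∀ x ∈ B, f x = 1) (hA : ∀ x ∉ A, f x = 0) :
    ∫⁻ x, ENNReal.ofReal |f x - B.indicator (fun _ => (1 : ℝ)) x| ∂μ ≤ μ (A \ B) := by
  refine lintegral_ofReal_le_measure (fun x => ?_) (fun x hx => ?_)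
  · by_cases hx : x ∈ B
    · simp [hx, hB x hx]
    · simpa [hx, abs_of_nonneg (hf₀ x)] using hf₁ x
  · by_cases hxB : x ∈ B
    · simp [hxB, hB x hxB]
    · simp [hxB, hA x fun hxA => hx ⟨hxA, hxB⟩]

end Measure

variable {ι : Type*}

def cube (ι : Type*) (s : ℝ) : Set (EuclideanSpace ℝ ι) := {x | ∀ i, |x i| ≤ s}

lemma cube_mono {s s' : ℝ} (h : s ≤ s') : cube ι s ⊆ cube ι s' :=
  fun _ hx i => (hx i).trans h

lemma cube_eq_preimage (s : ℝ) :
    cube ι s = WithLp.ofLp ⁻¹' univ.pi fun _ => Icc (-s) s := by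
  ext x
  simp only [cube, mem_ofPred_eq, mem_preimage, mem_univ_pi, mem_Icc, abs_le]

lemma measurableSet_cube [Fintype ι] (s : ℝ) : MeasurableSet (cube ι s) := by
  rw [cube_eq_preimage]
  exact (MeasurableSet.univ_pi fun _ => measurableSet_Icc).preimage
    (PiLp.volume_preserving_ofLp ι).measurable

lemma volume_cube [Fintype ι] {s : ℝ} (hs : 0 ≤ s) :
    volume (cube ι s) = ENNReal.ofReal ((2 * s) ^ Fintype.card ι) := by
  rw [cube_eq_preimage, (PiLp.volume_preserving_ofLp ι).measure_preimage
    (MeasurableSet.univ_pi fun _ => measurableSet_Icc).nullMeasurableSet, volume_pi_pi]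
  simp only [Real.volume_Icc, Finset.prod_const, Finset.card_univ, sub_neg_eq_add, two_mul]
  rw [ENNReal.ofReal_pow (by linarith)]

lemma tendsto_volume_cube_add_inv [Fintype ι] {t : ℝ} (ht : 0 ≤ t) :
    Tendsto (fun n : ℕ => volume (cube ι (t + (n : ℝ)⁻¹))) atTop (𝓝 (volume (cube ι t))) := by
  have h := ENNReal.tendsto_ofReal ((((tendsto_inv_atTop_zero.comp
    tendsto_natCast_atTop_atTop).const_add t).const_mul 2).pow (Fintype.card ι))
  rw [add_zero] at h
  rw [volume_cube ht]
  exact h.congr fun n => (volume_cube (by positivity)).symm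

noncomputable def tent {E : Type*} [Norm E] (a : ℝ) (x : E) : ℝ := max (1 - a * ‖x‖) 0

section Tent

variable {E : Type*} [SeminormedAddGroup E]

lemma tent_nonneg (a : ℝ) (x : E) : 0 ≤ tent a x := le_max_right _ _

lemma tent_le_one {a : ℝ} (ha : 0 ≤ a) (x : E) : tent a x ≤ 1 :=
  max_le (by nlinarith [norm_nonneg x]) zero_le_one

lemma tent_zero (a : ℝ) : tent a (0 : E) = 1 := by simp [tent]

end Tent

lemma tent_eq_zero_of_notMem_cube [Fintype ι] {a : ℝ} (ha : 0 < a) {x : EuclideanSpace ℝ ι}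
    (hx : x ∉ cube ι a⁻¹) : tent a x = 0 := by
  obtain ⟨i, hi⟩ : ∃ i, a⁻¹ < |x i| := by simpa [cube] using hx
  have hxi : |x i| ≤ ‖x‖ := by simpa using PiLp.norm_apply_le x i
  have : 1 ≤ a * ‖x‖ := by
    simpa [mul_inv_cancel₀ ha.ne'] using mul_le_mul_of_nonneg_left (hi.le.trans hxi) ha.le
  exact max_eq_right (by linarith)

lemma lintegral_tent_le [Fintype ι] {a : ℝ} (ha : 0 < a) :
    ∫⁻ x : EuclideanSpace ℝ ι, ENNReal.ofReal (tent a x) ≤ volume (cube ι a⁻¹) :=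
  lintegral_ofReal_le_measure (tent_le_one ha.le)
    fun _ hx => (tent_eq_zero_of_notMem_cube ha hx).le

noncomputable def cubeSup (f : EuclideanSpace ℝ ι → ℝ) (t : ℝ) (x : EuclideanSpace ℝ ι) : ℝ :=
  sSup (f '' {y | ∀ i, |y i - x i| ≤ t})

section CubeSup

variable {f : EuclideanSpace ℝ ι → ℝ} {t : ℝ}

lemma cubeSup_le_one (hf : ∀ y, f y ≤ 1) (x : EuclideanSpace ℝ ι) : cubeSup f t x ≤ 1 :=
  Real.sSup_le (by rintro _ ⟨y, -, rfl⟩; exact hf y) zero_le_one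

lemma le_cubeSup (hf : ∀ y, f y ≤ 1) {x y : EuclideanSpace ℝ ι} (hy : ∀ i, |y i - x i| ≤ t) :
    f y ≤ cubeSup f t x :=
  le_csSup ⟨1, by rintro _ ⟨z, -, rfl⟩; exact hf z⟩ ⟨y, hy, rfl⟩

lemma cubeSup_nonneg (hf₀ : ∀ y, 0 ≤ f y) (hf₁ : ∀ y, f y ≤ 1) (ht : 0 ≤ t)
    (x : EuclideanSpace ℝ ι) : 0 ≤ cubeSup f t x :=
  (hf₀ x).trans (le_cubeSup hf₁ fun i => by simpa using ht)

lemma cubeSup_eq_one (hf₁ : ∀ y, f y ≤ 1) (hpeak : f 0 = 1) {x : EuclideanSpace ℝ ι}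
    (hx : x ∈ cube ι t) : cubeSup f t x = 1 :=
  (cubeSup_le_one hf₁ x).antisymm (hpeak ▸ le_cubeSup hf₁ fun i => by simpa using hx i)

-- Every point of the window `x + [-t, t]^ι` has a coordinate beyond `r`.
lemma cubeSup_nonpos {r : ℝ} (hr : ∀ y ∉ cube ι r, f y = 0) {x : EuclideanSpace ℝ ι}
    (hx : x ∉ cube ι (t + r)) : cubeSup f t x ≤ 0 := by
  refine Real.sSup_le ?_ le_rfl
  rintro _ ⟨y, hy, rfl⟩
  obtain ⟨i, hi⟩ : ∃ i, t + r < |x i| := by simpa [cube] using hx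
  refine (hr y fun hy' => ?_).le
  have := abs_sub_abs_le_abs_sub (x i) (y i)
  linarith [hy' i, hy i, abs_sub_comm (x i) (y i)]

lemma lintegral_cubeSup_le [Fintype ι] (hf : ∀ y, f y ≤ 1) {r : ℝ}
    (hr : ∀ y ∉ cube ι r, f y = 0) :
    ∫⁻ x, ENNReal.ofReal (cubeSup f t x) ≤ volume (cube ι (t + r)) :=
  lintegral_ofReal_le_measure (cubeSup_le_one hf) fun _ hx => cubeSup_nonpos hr hx

lemma volume_cube_le_lintegral_cubeSup [Fintype ι] (hf₁ : ∀ y, f y ≤ 1) (hpeak : f 0 = 1) :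
    volume (cube ι t) ≤ ∫⁻ x, ENNReal.ofReal (cubeSup f t x) :=
  measure_le_lintegral_ofReal (measurableSet_cube t) fun _ hx => (cubeSup_eq_one hf₁ hpeak hx).ge

lemma lintegral_abs_cubeSup_sub_indicator_le [Fintype ι] (hf₀ : ∀ y, 0 ≤ f y)
    (hf₁ : ∀ y, f y ≤ 1) (hpeak : f 0 = 1) {r : ℝ} (hr₀ : 0 ≤ r) (hr : ∀ y ∉ cube ι r, f y = 0)
    (ht : 0 ≤ t) :
    ∫⁻ x, ENNReal.ofReal |cubeSup f t x - (cube ι t).indicator (fun _ => (1 : ℝ)) x|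
      ≤ volume (cube ι (t + r)) - volume (cube ι t) := by
  rw [← measure_sdiff (cube_mono (le_add_of_nonneg_right hr₀))
    (measurableSet_cube t).nullMeasurableSet ((volume_cube ht).trans_ne ENNReal.ofReal_ne_top)]
  exact lintegral_ofReal_abs_sub_indicator_le (cubeSup_nonneg hf₀ hf₁ ht) (cubeSup_le_one hf₁)
    (fun _ hx => cubeSup_eq_one hf₁ hpeak hx)
    (fun _ hx => (cubeSup_nonpos hr hx).antisymm (cubeSup_nonneg hf₀ hf₁ ht _))

end CubeSup

/-- `L¹` instability for the eikonal equation: `φ₀ⁿ(x) = (1 - n|x|)⁺ → 0` in `L¹`, but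
the solutions `φₙ(x,t) = sup_{x+[-t,t]^d} φ₀ⁿ` converge in `L¹` to the indicator of
`[-t,t]^d`, of `L¹` norm `(2t)^d ≠ 0`. -/
theorem stmt_5 (d : ℕ) (hd : 1 ≤ d)
    (φ : ℕ → EuclideanSpace ℝ (Fin d) → ℝ)
    (hφ : ∀ n x, φ n x = max (1 - (n : ℝ) * ‖x‖) 0)
    (Φ : ℕ → ℝ → EuclideanSpace ℝ (Fin d) → ℝ)
    (hΦ : ∀ n t x, Φ n t x = sSup ((φ n) '' {y | ∀ i, |y i - x i| ≤ t})) :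
    Tendsto (fun n => ∫⁻ x : EuclideanSpace ℝ (Fin d), ENNReal.ofReal (φ n x))
      atTop (𝓝 0) ∧
    ∀ t : ℝ, 0 < t →
      (Tendsto (fun n => ∫⁻ x : EuclideanSpace ℝ (Fin d),
            ENNReal.ofReal
              |Φ n t x - Set.indicator {y : EuclideanSpace ℝ (Fin d) | ∀ i, |y i| ≤ t}
                (fun _ => (1 : ℝ)) x|)
          atTop (𝓝 0) ∧
       Tendsto (fun n => ∫⁻ x : EuclideanSpace ℝ (Fin d), ENNReal.ofReal (Φ n t x))
          atTop (𝓝 (ENNReal.ofReal ((2 * t) ^ d)))) := by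
  obtain rfl : Φ = fun n => cubeSup (φ n) := funext fun n => funext fun t => funext (hΦ n t)
  obtain rfl : φ = fun n : ℕ => tent (n : ℝ) := funext fun n => funext (hφ n)
  have hpos : ∀ᶠ n : ℕ in atTop, (0 : ℝ) < n :=
    (eventually_gt_atTop 0).mono fun n hn => Nat.cast_pos.2 hn
  have hsupp {n : ℕ} (hn : (0 : ℝ) < n) : ∀ y ∉ cube (Fin d) (n : ℝ)⁻¹, tent (n : ℝ) y = 0 :=
    fun _ hy => tent_eq_zero_of_notMem_cube hn hy
  refine ⟨?_, fun t ht => ⟨?_, ?_⟩⟩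
  · have hvol : volume (cube (Fin d) 0) = 0 := by
      simp [volume_cube le_rfl, zero_pow (by omega : d ≠ 0)]
    refine tendsto_of_tendsto_of_tendsto_of_le_of_le' tendsto_const_nhds
      (hvol ▸ tendsto_volume_cube_add_inv le_rfl) (.of_forall fun _ => zero_le) ?_
    filter_upwards [hpos] with n hn
    simpa using lintegral_tent_le hn
  · have hshell := ENNReal.Tendsto.sub (tendsto_volume_cube_add_inv (ι := Fin d) ht.le)
      tendsto_const_nhds (.inr ((volume_cube (ι := Fin d) ht.le).trans_ne ENNReal.ofReal_ne_top))
    rw [tsub_self] at hshell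
    refine tendsto_of_tendsto_of_tendsto_of_le_of_le' tendsto_const_nhds hshell
      (.of_forall fun _ => zero_le) ?_
    filter_upwards [hpos] with n hn
    exact lintegral_abs_cubeSup_sub_indicator_le (ι := Fin d) (tent_nonneg _) (tent_le_one hn.le)
      (tent_zero _) (inv_nonneg.2 hn.le) (hsupp hn) ht.le
  · have hvol : volume (cube (Fin d) t) = ENNReal.ofReal ((2 * t) ^ d) := by
      simpa using volume_cube (ι := Fin d) ht.le
    rw [← hvol]
    refine tendsto_of_tendsto_of_tendsto_of_le_of_le' tendsto_const_nhds
      (tendsto_volume_cube_add_inv ht.le)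
      (.of_forall fun n =>
        volume_cube_le_lintegral_cubeSup (tent_le_one n.cast_nonneg) (tent_zero _))
      ?_
    filter_upwards [hpos] with n hn
    exact lintegral_cubeSup_le (tent_le_one hn.le) (hsupp hn)
end

section
/- Let ν > 0, η ≥ 0, and for t, s ≥ 0 with νt + s > 0 define, for x ∈ ℝ^d, Ψ(x; t, s) := U((f(x) − ηt − s)⁺/√(νt + s)), where f(x) := dist(x, [-1,1]^d) and U(r) := c₀∫_r^∞ e^{−σ²/4} dσ, U(0) = 1. Then ∫_{ℝ^d} Ψ(x; t, s) dx = 2^d + Σ_{i=1}^d cᵢ(ηt+s)^i + Σ_{i=1}^d i·cᵢ·√(νt+s)·∫_0^∞ (r√(νt+s) + ηt + s)^{i−1} U(r) dr, where the cᵢ > 0 are the Steiner coefficients satisfying meas{f ≤ r} = 2^d + Σᵢ cᵢ r^i. -/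
/-!
Write `U = c₀ W` with `W r = ∫_r^∞ K`, `K σ = exp (-σ²/4)`, and put `a = ηt + s`, `b = √(νt + s)`.
Since `W (max z 0) = ∫_{σ > 0, σ ≥ z} K σ dσ`, Tonelli gives the layer-cake formula
`∫ W (max ((f x - a)/b) 0) dx = ∫_0^∞ K σ |{f ≤ a + σb}| dσ = ∫_0^∞ K σ P(a + σb) dσ`,
where `P` is the Steiner polynomial. The same swap on the half line, with weight `(rb + a)^(i-1)`,
turns `i b ∫_0^∞ (rb + a)^(i-1) W r dr` into `∫_0^∞ K σ ((a + σb)^i - a^i) dσ`. Summing over `i`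
and using `c₀ ∫_0^∞ K = 1` for the constant term `P(a)` gives the identity.
-/

open MeasureTheory Set Real
open scoped ENNReal

theorem antitone_setIntegral_Ioi {K : ℝ → ℝ} (hK : Integrable K) (hK0 : 0 ≤ K) :
    Antitone fun r => ∫ σ in Ioi r, K σ := fun _ _ h =>
  setIntegral_mono_set hK.integrableOn (ae_of_all _ hK0) (Ioi_subset_Ioi h).eventuallyLE

theorem setLIntegral_Ioi_max_eq_indicator (k : ℝ → ℝ≥0∞) (z : ℝ) :
    ∫⁻ σ in Ioi (max z 0), k σ = ∫⁻ σ in Ioi 0, (Ici z).indicator k σ := by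
  rw [lintegral_indicator measurableSet_Ici, Measure.restrict_restrict measurableSet_Ici,
    ← Ioi_inter_Ioi]
  exact setLIntegral_congr (Ioi_ae_eq_Ici.inter .rfl)

section Layers

variable {α : Type*} [MeasurableSpace α] (μ : Measure α) [SFinite μ]

theorem lintegral_mul_lintegral_Ioi_max {w : α → ℝ≥0∞} {g : α → ℝ} (hw : Measurable w)
    (hg : Measurable g) {k : ℝ → ℝ≥0∞} (hk : Measurable k) :
    ∫⁻ x, w x * (∫⁻ σ in Ioi (max (g x) 0), k σ) ∂μ
      = ∫⁻ σ in Ioi 0, k σ * ∫⁻ x in {x | g x ≤ σ}, w x ∂μ := by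
  have hmeas : Measurable fun p : α × ℝ => w p.1 * (Ici (g p.1)).indicator k p.2 := by
    have : MeasurableSet {p : α × ℝ | g p.1 ≤ p.2} :=
      measurableSet_le (hg.comp measurable_fst) measurable_snd
    exact (hw.comp measurable_fst).mul ((hk.comp measurable_snd).indicator this)
  simp_rw [setLIntegral_Ioi_max_eq_indicator,
    ← lintegral_const_mul'' _ (hk.indicator measurableSet_Ici).aemeasurable]
  rw [lintegral_lintegral_swap hmeas.aemeasurable]
  refine lintegral_congr fun σ => ?_
  have hind : ∀ x, w x * (Ici (g x)).indicator k σ = k σ * {x | g x ≤ σ}.indicator w x := by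
    intro x
    by_cases hx : g x ≤ σ <;> simp [hx, mul_comm]
  simp_rw [hind]
  rw [lintegral_const_mul _ (hw.indicator (measurableSet_le hg measurable_const)),
    lintegral_indicator (measurableSet_le hg measurable_const)]

theorem integral_mul_setIntegral_Ioi_max {w g : α → ℝ} (hw : Measurable w) (hw0 : 0 ≤ᵐ[μ] w)
    (hg : Measurable g) (hwg : ∀ σ, 0 < σ → IntegrableOn w {x | g x ≤ σ} μ) {K : ℝ → ℝ}
    (hKm : Measurable K) (hK : Integrable K) (hK0 : 0 ≤ K) :
    ∫ x, w x * (∫ σ in Ioi (max (g x) 0), K σ) ∂μ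
      = ∫ σ in Ioi 0, K σ * ∫ x in {x | g x ≤ σ}, w x ∂μ := by
  have hW0 : ∀ r, 0 ≤ ∫ σ in Ioi r, K σ := fun _ =>
    setIntegral_nonneg measurableSet_Ioi fun σ _ => hK0 σ
  have hmono : MonotoneOn (fun σ => ∫ x in {x | g x ≤ σ}, w x ∂μ) (Ioi 0) := fun σ hσ τ _ h =>
    setIntegral_mono_set (hwg τ (lt_of_lt_of_le hσ h)) (ae_restrict_of_ae hw0)
      (Filter.Eventually.of_forall fun x (hx : g x ≤ σ) => hx.trans h)
  rw [integral_eq_lintegral_of_nonneg_ae (hw0.mono fun x hx => mul_nonneg hx (hW0 _))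
      (hw.mul ((antitone_setIntegral_Ioi hK hK0).measurable.comp
        (hg.max measurable_const))).aestronglyMeasurable,
    integral_eq_lintegral_of_nonneg_ae
      (ae_of_all _ fun σ => mul_nonneg (hK0 σ) (integral_nonneg_of_ae (ae_restrict_of_ae hw0)))
      (hKm.aestronglyMeasurable.mul (aemeasurable_restrict_of_monotoneOn measurableSet_Ioi
        hmono).aestronglyMeasurable)]
  congr 1
  calc ∫⁻ x, ENNReal.ofReal (w x * ∫ σ in Ioi (max (g x) 0), K σ) ∂μ
      = ∫⁻ x, ENNReal.ofReal (w x) * (∫⁻ σ in Ioi (max (g x) 0), ENNReal.ofReal (K σ)) ∂μ := by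
        simp_rw [ENNReal.ofReal_mul' (hW0 _),
          ofReal_integral_eq_lintegral_ofReal hK.integrableOn (ae_of_all _ hK0)]
    _ = ∫⁻ σ in Ioi 0, ENNReal.ofReal (K σ) * ∫⁻ x in {x | g x ≤ σ}, ENNReal.ofReal (w x) ∂μ :=
        lintegral_mul_lintegral_Ioi_max μ hw.ennreal_ofReal hg hKm.ennreal_ofReal
    _ = ∫⁻ σ in Ioi 0, ENNReal.ofReal (K σ * ∫ x in {x | g x ≤ σ}, w x ∂μ) := by
        refine setLIntegral_congr_fun measurableSet_Ioi fun σ hσ => ?_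
        rw [ENNReal.ofReal_mul (hK0 σ),
          ofReal_integral_eq_lintegral_ofReal (hwg σ hσ) (ae_restrict_of_ae hw0)]

theorem integral_setIntegral_Ioi_max_div {f : α → ℝ} (hf : Measurable f) {a b : ℝ} (hb : 0 < b)
    (hfin : ∀ σ, 0 < σ → μ {x | f x ≤ σ * b + a} ≠ ∞) {K : ℝ → ℝ} (hKm : Measurable K)
    (hK : Integrable K) (hK0 : 0 ≤ K) :
    ∫ x, (∫ σ in Ioi (max ((f x - a) / b) 0), K σ) ∂μ
      = ∫ σ in Ioi 0, K σ * μ.real {x | f x ≤ σ * b + a} := by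
  have hset : ∀ σ, {x | (f x - a) / b ≤ σ} = {x | f x ≤ σ * b + a} := fun σ => by
    ext x; simp only [mem_ofPred_eq, div_le_iff₀ hb, sub_le_iff_le_add]
  simpa [hset, setIntegral_const] using integral_mul_setIntegral_Ioi_max μ (w := fun _ => 1)
    measurable_const (ae_of_all _ fun _ => zero_le_one) ((hf.sub_const a).div_const b)
    (fun σ hσ => by rw [hset]; exact integrableOn_const (hfin σ hσ)) hKm hK hK0

end Layers

theorem integral_mul_add_pow {b : ℝ} (hb : b ≠ 0) (a σ : ℝ) (n : ℕ) :
    ∫ r in 0..σ, (r * b + a) ^ n = ((σ * b + a) ^ (n + 1) - a ^ (n + 1)) / ((n + 1) * b) := by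
  have := intervalIntegral.integral_comp_mul_add (a := 0) (b := σ) (fun x => x ^ n) hb a
  simp only [mul_zero, zero_add, integral_pow, smul_eq_mul] at this
  simp_rw [mul_comm _ b, this]
  field_simp

theorem setIntegral_Ioi_mul_setIntegral_Ioi_eq {w K : ℝ → ℝ} (hw : Continuous w)
    (hw0 : ∀ r, 0 < r → 0 ≤ w r) (hKm : Measurable K) (hK : Integrable K) (hK0 : 0 ≤ K) :
    ∫ r in Ioi 0, w r * ∫ σ in Ioi r, K σ = ∫ σ in Ioi 0, K σ * ∫ r in 0..σ, w r := by
  have hIoc : ∀ σ, (volume.restrict (Ioi 0)).restrict {x : ℝ | x ≤ σ}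
      = volume.restrict (Ioc 0 σ) := fun σ => by
    change (volume.restrict (Ioi 0)).restrict (Iic σ) = _
    rw [Measure.restrict_restrict measurableSet_Iic, Iic_inter_Ioi]
  have key := integral_mul_setIntegral_Ioi_max (volume.restrict (Ioi 0)) hw.measurable
    ((ae_restrict_iff' measurableSet_Ioi).2 (ae_of_all _ hw0)) (g := fun x => x) measurable_id
    (fun σ _ => by
      rw [IntegrableOn, hIoc]
      exact hw.integrableOn_Icc.mono_set Ioc_subset_Icc_self) hKm hK hK0
  calc ∫ r in Ioi 0, w r * ∫ σ in Ioi r, K σ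
      = ∫ r in Ioi 0, w r * ∫ σ in Ioi (max r 0), K σ :=
        setIntegral_congr_fun measurableSet_Ioi fun r (hr : 0 < r) => by rw [max_eq_left hr.le]
    _ = _ := key
    _ = ∫ σ in Ioi 0, K σ * ∫ r in 0..σ, w r :=
        setIntegral_congr_fun measurableSet_Ioi fun σ (hσ : 0 < σ) => by
          rw [hIoc, intervalIntegral.integral_of_le hσ.le]

theorem setIntegral_Ioi_mul_add_pow_mul_setIntegral_Ioi {K : ℝ → ℝ} (hKm : Measurable K)
    (hK : Integrable K) (hK0 : 0 ≤ K) {a b : ℝ} (ha : 0 ≤ a) (hb : 0 < b) {i : ℕ} (hi : 1 ≤ i) :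
    i * b * ∫ r in Ioi 0, (r * b + a) ^ (i - 1) * ∫ σ in Ioi r, K σ
      = ∫ σ in Ioi 0, K σ * ((σ * b + a) ^ i - a ^ i) := by
  obtain ⟨n, rfl⟩ := Nat.exists_eq_add_of_le' hi
  rw [setIntegral_Ioi_mul_setIntegral_Ioi_eq (by fun_prop) (fun r hr => by positivity)
    hKm hK hK0, ← integral_const_mul]
  refine setIntegral_congr_fun measurableSet_Ioi fun σ _ => ?_
  rw [Nat.add_sub_cancel, integral_mul_add_pow hb.ne']
  push_cast
  field_simp

theorem exp_neg_sq_div_four (σ : ℝ) : exp (-σ ^ 2 / 4) = exp (-(1 / 4) * σ ^ 2) := by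
  ring_nf

theorem integrable_exp_neg_sq_div_four : Integrable fun σ : ℝ => exp (-σ ^ 2 / 4) := by
  simpa only [exp_neg_sq_div_four] using
    integrable_exp_neg_mul_sq (by norm_num : (0 : ℝ) < 1 / 4)

theorem integrableOn_Ioi_exp_neg_sq_div_four_mul_pow (n : ℕ) :
    IntegrableOn (fun σ : ℝ => exp (-σ ^ 2 / 4) * σ ^ n) (Ioi 0) := by
  simpa only [exp_neg_sq_div_four, rpow_natCast, mul_comm] using
    integrableOn_rpow_mul_exp_neg_mul_sq (by norm_num : (0 : ℝ) < 1 / 4)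
      (neg_one_lt_zero.trans_le n.cast_nonneg)

theorem setIntegral_Ioi_exp_neg_sq_div_four_pos :
    0 < ∫ σ in Ioi (0 : ℝ), exp (-σ ^ 2 / 4) := by
  simp_rw [exp_neg_sq_div_four, integral_gaussian_Ioi]
  positivity

theorem integrableOn_Ioi_mul_mul_add_pow {K : ℝ → ℝ}
    (h : ∀ n : ℕ, IntegrableOn (fun σ => K σ * σ ^ n) (Ioi 0)) (b a : ℝ) (i : ℕ) :
    IntegrableOn (fun σ => K σ * (σ * b + a) ^ i) (Ioi 0) := by
  have hexp : ∀ σ, K σ * (σ * b + a) ^ i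
      = ∑ k ∈ Finset.range (i + 1), (b ^ k * a ^ (i - k) * i.choose k) * (K σ * σ ^ k) := by
    intro σ
    rw [add_pow, Finset.mul_sum]
    exact Finset.sum_congr rfl fun k _ => by ring
  simp_rw [hexp]
  exact integrable_finsetSum _ fun k _ => (h k).const_mul _

theorem setIntegral_Ioi_mul_const_add_sum_pow {K : ℝ → ℝ} (hK : IntegrableOn K (Ioi 0))
    (hmom : ∀ n : ℕ, IntegrableOn (fun σ => K σ * σ ^ n) (Ioi 0)) (C a b : ℝ) (c : ℕ → ℝ)
    (I : Finset ℕ) :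
    ∫ σ in Ioi 0, K σ * (C + ∑ i ∈ I, c i * (σ * b + a) ^ i)
      = (C + ∑ i ∈ I, c i * a ^ i) * (∫ σ in Ioi 0, K σ)
        + ∑ i ∈ I, c i * ∫ σ in Ioi 0, K σ * ((σ * b + a) ^ i - a ^ i) := by
  have hint : ∀ i, IntegrableOn (fun σ => c i * (K σ * ((σ * b + a) ^ i - a ^ i))) (Ioi 0) :=
    fun i => by
      simpa only [IntegrableOn, mul_sub, Pi.sub_def] using
        ((integrableOn_Ioi_mul_mul_add_pow hmom b a i).sub (hK.mul_const (a ^ i))).const_mul (c i)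
  simp_rw [← integral_const_mul]
  rw [← integral_finsetSum _ fun i _ => hint i,
    ← integral_add (hK.const_mul _) (integrable_finsetSum _ fun i _ => hint i)]
  refine integral_congr_ae (ae_of_all _ fun σ => ?_)
  simp only [mul_add, add_mul, Finset.mul_sum, Finset.sum_mul, mul_sub, Finset.sum_sub_distrib]
  ring_nf

theorem stmt_17_general (d : ℕ) (η ν t s : ℝ)
    (hη : 0 ≤ η) (ht : 0 ≤ t) (hs : 0 ≤ s) (hpos : 0 < ν * t + s)
    (c₀ : ℝ) (hc₀ : c₀ = (∫ σ in Set.Ioi (0 : ℝ), Real.exp (-σ ^ 2 / 4))⁻¹)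
    (U : ℝ → ℝ) (hU : ∀ r, U r = c₀ * ∫ σ in Set.Ioi r, Real.exp (-σ ^ 2 / 4))
    (f : EuclideanSpace ℝ (Fin d) → ℝ)
    (hf : ∀ x, f x = Metric.infDist x {y : EuclideanSpace ℝ (Fin d) | ∀ i, |y i| ≤ 1})
    (c : ℕ → ℝ) (hcpos : ∀ i ∈ Finset.Icc 1 d, 0 < c i)
    (hc : ∀ r : ℝ, 0 ≤ r →
      volume {x : EuclideanSpace ℝ (Fin d) | f x ≤ r}
        = ENNReal.ofReal (2 ^ d + ∑ i ∈ Finset.Icc 1 d, c i * r ^ i)) :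
    ∫ x : EuclideanSpace ℝ (Fin d),
        U (max (f x - η * t - s) 0 / Real.sqrt (ν * t + s))
      = 2 ^ d + (∑ i ∈ Finset.Icc 1 d, c i * (η * t + s) ^ i)
        + ∑ i ∈ Finset.Icc 1 d, (i : ℝ) * c i * Real.sqrt (ν * t + s) *
            ∫ r in Set.Ioi (0 : ℝ),
              (r * Real.sqrt (ν * t + s) + η * t + s) ^ (i - 1) * U r := by
  set b := √(ν * t + s)
  -- regroup so that `set a` below abstracts every occurrence of `η * t + s`
  simp_rw [sub_sub, add_assoc _ (η * t) s]
  set a := η * t + s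
  set K : ℝ → ℝ := fun σ => exp (-σ ^ 2 / 4)
  have hb : 0 < b := sqrt_pos.2 hpos
  have ha : 0 ≤ a := by positivity
  have hKm : Measurable K := by fun_prop
  have hK : Integrable K := integrable_exp_neg_sq_div_four
  have hK0 : 0 ≤ K := fun σ => (exp_pos _).le
  have hc₀K : c₀ * ∫ σ in Ioi 0, K σ = 1 :=
    hc₀ ▸ inv_mul_cancel₀ setIntegral_Ioi_exp_neg_sq_div_four_pos.ne'
  have hfm : Measurable f :=
    (show f = _ from funext hf) ▸ (Metric.continuous_infDist_pt _).measurable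
  have hLHS : ∫ x, U (max (f x - a) 0 / b)
      = c₀ * ∫ σ in Ioi 0, K σ * (2 ^ d + ∑ i ∈ Finset.Icc 1 d, c i * (σ * b + a) ^ i) := by
    simp_rw [← max_div_div_right hb.le, zero_div, hU, integral_const_mul]
    rw [integral_setIntegral_Ioi_max_div volume hfm hb
      (fun σ hσ => by rw [hc _ (by positivity)]; exact ENNReal.ofReal_ne_top) hKm hK hK0]
    refine congrArg _ (setIntegral_congr_fun measurableSet_Ioi fun σ (hσ : 0 < σ) => ?_)
    have hR : 0 ≤ σ * b + a := by positivity
    rw [measureReal_def, hc _ hR, ENNReal.toReal_ofReal (add_nonneg (by positivity)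
      (Finset.sum_nonneg fun i hi => mul_nonneg (hcpos i hi).le (pow_nonneg hR i)))]
  have hterm : ∀ i ∈ Finset.Icc 1 d,
      (i : ℝ) * c i * b * ∫ r in Ioi 0, (r * b + a) ^ (i - 1) * U r
        = c₀ * c i * ∫ σ in Ioi 0, K σ * ((σ * b + a) ^ i - a ^ i) := by
    intro i hi
    simp_rw [hU, mul_left_comm _ c₀, integral_const_mul,
      ← setIntegral_Ioi_mul_add_pow_mul_setIntegral_Ioi hKm hK hK0 ha hb (Finset.mem_Icc.1 hi).1]
    ring
  rw [hLHS, Finset.sum_congr rfl hterm, setIntegral_Ioi_mul_const_add_sum_pow hK.integrableOn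
    integrableOn_Ioi_exp_neg_sq_div_four_mul_pow, mul_add, Finset.mul_sum]
  simp_rw [← mul_assoc]
  linear_combination (2 ^ d + ∑ i ∈ Finset.Icc 1 d, c i * a ^ i) * hc₀K

/-- Coarea computation of `∫ U((f(x) - ηt - s)⁺/√(νt+s)) dx` where `f` is the
distance to the cube `[-1,1]^d`, via the Steiner coefficients `cᵢ` of the cube. -/
theorem stmt_17 (d : ℕ) (hd : 1 ≤ d) (η ν t s : ℝ)
    (hη : 0 ≤ η) (hν : 0 < ν) (ht : 0 ≤ t) (hs : 0 ≤ s) (hpos : 0 < ν * t + s)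
    (c₀ : ℝ) (hc₀ : c₀ = (∫ σ in Set.Ioi (0 : ℝ), Real.exp (-σ ^ 2 / 4))⁻¹)
    (U : ℝ → ℝ) (hU : ∀ r, U r = c₀ * ∫ σ in Set.Ioi r, Real.exp (-σ ^ 2 / 4))
    (f : EuclideanSpace ℝ (Fin d) → ℝ)
    (hf : ∀ x, f x = Metric.infDist x {y : EuclideanSpace ℝ (Fin d) | ∀ i, |y i| ≤ 1})
    (c : ℕ → ℝ) (hcpos : ∀ i ∈ Finset.Icc 1 d, 0 < c i)
    (hc : ∀ r : ℝ, 0 ≤ r →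
      volume {x : EuclideanSpace ℝ (Fin d) | f x ≤ r}
        = ENNReal.ofReal (2 ^ d + ∑ i ∈ Finset.Icc 1 d, c i * r ^ i)) :
    ∫ x : EuclideanSpace ℝ (Fin d),
        U (max (f x - η * t - s) 0 / Real.sqrt (ν * t + s))
      = 2 ^ d + (∑ i ∈ Finset.Icc 1 d, c i * (η * t + s) ^ i)
        + ∑ i ∈ Finset.Icc 1 d, (i : ℝ) * c i * Real.sqrt (ν * t + s) *
            ∫ r in Set.Ioi (0 : ℝ),
              (r * Real.sqrt (ν * t + s) + η * t + s) ^ (i - 1) * U r :=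
  stmt_17_general d η ν t s hη ht hs hpos c₀ hc₀ U hU f hf c hcpos hc
end
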